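/- Let X ∈ ℝ^{m×ρ} have rank ρ with SVD X = U_X Σ_X V_X^T, and set π_i = λ_i(Σ_X²)/‖X‖_F² for i = 1,…,ρ. Let ξ^{l(X)}_ℓ = (U_X U_X^T)_{ℓℓ}/ρ and ξ^{r(X)}_ℓ = ‖X_{(ℓ)}‖²/‖X‖_F². Then ‖ξ^{r(X)} − ξ^{l(X)}‖₂ ≤ sqrt( Σ_{i=1}^ρ π_i² − 1/ρ ) and ‖ξ^{r(X)} − ξ^{l(X)}‖_∞ ≤ max( max_i π_i − 1/ρ , 1/ρ − min_i π_i ). -/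

import Mathlib

/-!
Put `c i = π i - 1/ρ`. Since row `ℓ` of `X` has squared norm `∑ i, s i ^ 2 * U ℓ i ^ 2`, the
difference `ξʳ ℓ - ξˡ ℓ` is the diagonal entry `∑ i, c i * U ℓ i ^ 2` of `U diag(c) Uᵀ`.
The `ℓ²` bound: the diagonal of a matrix is dominated by its Frobenius norm, and
`‖U diag(c) Uᵀ‖_F² = ∑ c i ^ 2 = ∑ π i ^ 2 - 1/ρ` because `∑ π i = 1`.
The `ℓ^∞` bound: the entry is a combination of the `c i` with the leverage weights `U ℓ i ^ 2`,
which are nonnegative with sum at most `1`, while `min c ≤ 0 ≤ max c`.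
-/

open Matrix Finset

namespace Matrix

theorem mul_diagonal_mul_transpose_apply {m n p : Type*} [Fintype n] [DecidableEq n]
    (A : Matrix m n ℝ) (B : Matrix p n ℝ) (c : n → ℝ) (i : m) (k : p) :
    (A * diagonal c * Bᵀ) i k = ∑ j, c j * (A i j * B k j) := by
  rw [mul_apply]
  exact sum_congr rfl fun j _ => by rw [mul_diagonal, transpose_apply]; ring

theorem sum_sq_eq_mul_transpose_apply {m n : Type*} [Fintype n] (A : Matrix m n ℝ) (i : m) :
    ∑ j, A i j ^ 2 = (A * Aᵀ) i i := by
  simp only [mul_apply, transpose_apply, sq]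

theorem mul_diagonal_mul_transpose_mul_transpose_self {m n p : Type*} [Fintype n] [Fintype p]
    [DecidableEq n] (A : Matrix m n ℝ) {B : Matrix p n ℝ} (hB : Bᵀ * B = 1) (c : n → ℝ) :
    A * diagonal c * Bᵀ * (A * diagonal c * Bᵀ)ᵀ = A * diagonal (c ^ 2) * Aᵀ := by
  rw [transpose_mul, transpose_mul, transpose_transpose, diagonal_transpose]
  calc A * diagonal c * Bᵀ * (B * (diagonal c * Aᵀ))
      = A * (diagonal c * (Bᵀ * B) * diagonal c) * Aᵀ := by simp only [Matrix.mul_assoc]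
    _ = A * diagonal (c ^ 2) * Aᵀ := by rw [hB, Matrix.mul_one, diagonal_mul_diagonal, sq]; rfl

theorem sum_sq_mul_diagonal_mul_transpose_apply {m n p : Type*} [Fintype n] [Fintype p]
    [DecidableEq n] (A : Matrix m n ℝ) {B : Matrix p n ℝ} (hB : Bᵀ * B = 1) (c : n → ℝ) (i : m) :
    ∑ k, (A * diagonal c * Bᵀ) i k ^ 2 = ∑ j, c j ^ 2 * A i j ^ 2 := by
  rw [sum_sq_eq_mul_transpose_apply, mul_diagonal_mul_transpose_mul_transpose_self A hB,
    mul_diagonal_mul_transpose_apply]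
  simp only [Pi.pow_apply, sq]

theorem sum_sq_col_eq_one {m n : Type*} [Fintype m] [DecidableEq n] {U : Matrix m n ℝ}
    (hU : Uᵀ * U = 1) (j : n) : ∑ i, U i j ^ 2 = 1 := by
  simpa [mul_apply, sq] using congrFun (congrFun hU j) j

theorem sum_sq_mul_diagonal_mul_transpose {m n p : Type*} [Fintype m] [Fintype n] [Fintype p]
    [DecidableEq n] {A : Matrix m n ℝ} {B : Matrix p n ℝ} (hA : Aᵀ * A = 1) (hB : Bᵀ * B = 1)
    (c : n → ℝ) : ∑ i, ∑ k, (A * diagonal c * Bᵀ) i k ^ 2 = ∑ j, c j ^ 2 := by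
  simp_rw [sum_sq_mul_diagonal_mul_transpose_apply A hB, sum_comm (γ := m), ← mul_sum,
    sum_sq_col_eq_one hA, mul_one]

theorem sum_sq_row_le_one {m n : Type*} [Fintype m] [Fintype n] [DecidableEq n]
    {U : Matrix m n ℝ} (hU : Uᵀ * U = 1) (i : m) : ∑ j, U i j ^ 2 ≤ 1 := by
  set P := U * diagonal (1 : n → ℝ) * Uᵀ with hP
  have hdiag : P i i = ∑ j, U i j ^ 2 := by
    simp only [hP, mul_diagonal_mul_transpose_apply, Pi.one_apply, one_mul, sq]
  have hrow : ∑ k, P i k ^ 2 = P i i := by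
    rw [hP, sum_sq_mul_diagonal_mul_transpose_apply U hU, ← hP, hdiag]
    simp only [Pi.one_apply, one_pow, one_mul]
  have hsq : P i i ^ 2 ≤ P i i :=
    (single_le_sum (f := fun k => P i k ^ 2) (fun _ _ => sq_nonneg _) (mem_univ i)).trans
      hrow.le
  have : 0 ≤ P i i := hdiag ▸ sum_nonneg fun _ _ => sq_nonneg _
  nlinarith

theorem sum_sq_sum_mul_sq_le {m n : Type*} [Fintype m] [Fintype n] [DecidableEq n]
    {U : Matrix m n ℝ} (hU : Uᵀ * U = 1) (c : n → ℝ) :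
    ∑ i, (∑ j, c j * U i j ^ 2) ^ 2 ≤ ∑ j, c j ^ 2 := by
  calc ∑ i, (∑ j, c j * U i j ^ 2) ^ 2 = ∑ i, (U * diagonal c * Uᵀ) i i ^ 2 := by
        simp only [mul_diagonal_mul_transpose_apply, sq]
    _ ≤ ∑ i, ∑ k, (U * diagonal c * Uᵀ) i k ^ 2 := sum_le_sum fun i _ =>
        single_le_sum (f := fun k => _ ^ 2) (fun _ _ => sq_nonneg _) (mem_univ i)
    _ = ∑ j, c j ^ 2 := sum_sq_mul_diagonal_mul_transpose hU hU c

end Matrix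

theorem sum_mul_le_of_sum_le_one {ι : Type*} {s : Finset ι} {c w : ι → ℝ} {b : ℝ} (hb : 0 ≤ b)
    (hc : ∀ i ∈ s, c i ≤ b) (hw : ∀ i ∈ s, 0 ≤ w i) (hw1 : ∑ i ∈ s, w i ≤ 1) :
    ∑ i ∈ s, c i * w i ≤ b :=
  calc ∑ i ∈ s, c i * w i ≤ ∑ i ∈ s, b * w i :=
        sum_le_sum fun i hi => mul_le_mul_of_nonneg_right (hc i hi) (hw i hi)
    _ = b * ∑ i ∈ s, w i := (mul_sum _ _ _).symm
    _ ≤ b := mul_le_of_le_one_right hb hw1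

theorem abs_sum_mul_le_max_of_sum_le_one {ι : Type*} {s : Finset ι} {c w : ι → ℝ} {a b : ℝ}
    (ha : a ≤ 0) (hb : 0 ≤ b) (hc : ∀ i ∈ s, c i ∈ Set.Icc a b) (hw : ∀ i ∈ s, 0 ≤ w i)
    (hw1 : ∑ i ∈ s, w i ≤ 1) : |∑ i ∈ s, c i * w i| ≤ max b (-a) := by
  have hupper := sum_mul_le_of_sum_le_one hb (fun i hi => (hc i hi).2) hw hw1
  have hlower := sum_mul_le_of_sum_le_one (c := fun i => -c i) (neg_nonneg.2 ha)
    (fun i hi => neg_le_neg (hc i hi).1) hw hw1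
  simp only [neg_mul, sum_neg_distrib] at hlower
  exact abs_le.2 ⟨by linarith [le_max_right b (-a)], hupper.trans (le_max_left _ _)⟩

theorem inv_card_le_sup' {ι : Type*} [Fintype ι] [Nonempty ι] {f : ι → ℝ} (hf : ∑ i, f i = 1) :
    1 / Fintype.card ι ≤ univ.sup' univ_nonempty f := by
  obtain ⟨i, -, hi⟩ := exists_le_of_sum_le (univ_nonempty (α := ι))
    (f := fun _ => 1 / (Fintype.card ι : ℝ)) (g := f) (by simp [hf])
  exact hi.trans (le_sup' f (mem_univ i))

theorem inf'_le_inv_card {ι : Type*} [Fintype ι] [Nonempty ι] {f : ι → ℝ} (hf : ∑ i, f i = 1) :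
    univ.inf' univ_nonempty f ≤ 1 / Fintype.card ι := by
  obtain ⟨i, -, hi⟩ := exists_le_of_sum_le (univ_nonempty (α := ι))
    (f := f) (g := fun _ => 1 / (Fintype.card ι : ℝ)) (by simp [hf])
  exact (inf'_le f (mem_univ i)).trans hi

theorem sum_sub_inv_card_sq {ι : Type*} [Fintype ι] [Nonempty ι] {f : ι → ℝ}
    (hf : ∑ i, f i = 1) :
    ∑ i, (f i - 1 / Fintype.card ι) ^ 2 = ∑ i, f i ^ 2 - 1 / Fintype.card ι := by
  have hcard : (Fintype.card ι : ℝ) ≠ 0 := by positivity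
  simp only [sub_sq, sum_add_distrib, sum_sub_distrib, ← sum_mul, ← mul_sum, hf, sum_const,
    card_univ, nsmul_eq_mul]
  field_simp
  ring

theorem stmt18_general {m ρ : ℕ} [NeZero ρ]
    (X : Matrix (Fin m) (Fin ρ) ℝ)
    (U : Matrix (Fin m) (Fin ρ) ℝ) (hU : Uᵀ * U = 1)
    (V : Matrix (Fin ρ) (Fin ρ) ℝ) (hV : Vᵀ * V = 1)
    (s : Fin ρ → ℝ) (hs : ∀ i, 0 < s i)
    (hX : X = U * Matrix.diagonal s * Vᵀ)
    (π : Fin ρ → ℝ) (hπ : ∀ i, π i = s i ^ 2 / (∑ ℓ, ∑ j, X ℓ j ^ 2))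
    (ξl ξr : Fin m → ℝ)
    (hξl : ∀ ℓ, ξl ℓ = (∑ j, U ℓ j ^ 2) / ρ)
    (hξr : ∀ ℓ, ξr ℓ = (∑ j, X ℓ j ^ 2) / (∑ ℓ', ∑ j, X ℓ' j ^ 2)) :
    Real.sqrt (∑ ℓ, (ξr ℓ - ξl ℓ) ^ 2) ≤ Real.sqrt ((∑ i, π i ^ 2) - 1 / ρ) ∧
    ∀ ℓ, |ξr ℓ - ξl ℓ| ≤
      max (Finset.univ.sup' Finset.univ_nonempty π - 1 / ρ)
          (1 / ρ - Finset.univ.inf' Finset.univ_nonempty π) := by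
  have hrow (ℓ) : ∑ j, X ℓ j ^ 2 = ∑ i, s i ^ 2 * U ℓ i ^ 2 :=
    hX ▸ sum_sq_mul_diagonal_mul_transpose_apply U hV s ℓ
  have hF : ∑ ℓ, ∑ j, X ℓ j ^ 2 = ∑ i, s i ^ 2 := hX ▸ sum_sq_mul_diagonal_mul_transpose hU hV s
  have hFpos : 0 < ∑ i, s i ^ 2 := sum_pos (fun i _ => pow_pos (hs i) 2) univ_nonempty
  have hπsum : ∑ i, π i = 1 := by simp_rw [hπ, ← sum_div, hF, div_self hFpos.ne']
  have hdiff (ℓ) : ξr ℓ - ξl ℓ = ∑ i, (π i - 1 / ρ) * U ℓ i ^ 2 := by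
    rw [hξr, hξl, hrow, hF]
    simp only [hπ, hF, sub_mul, sum_sub_distrib, sum_div, div_mul_eq_mul_div, one_mul]
  have hcard : (Fintype.card (Fin ρ) : ℝ) = ρ := by simp
  refine ⟨Real.sqrt_le_sqrt ?_, fun ℓ => ?_⟩
  · simp_rw [hdiff]
    exact (sum_sq_sum_mul_sq_le hU _).trans (hcard ▸ sum_sub_inv_card_sq hπsum).le
  · rw [hdiff, ← neg_sub (inf' _ _ π)]
    refine abs_sum_mul_le_max_of_sum_le_one ?_ ?_ (fun i _ => ⟨?_, ?_⟩) (fun _ _ => sq_nonneg _)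
      (sum_sq_row_le_one hU ℓ)
    · exact sub_nonpos.2 (hcard ▸ inf'_le_inv_card hπsum)
    · exact sub_nonneg.2 (hcard ▸ inv_card_le_sup' hπsum)
    · exact sub_le_sub_right (inf'_le π (mem_univ i)) _
    · exact sub_le_sub_right (le_sup' π (mem_univ i)) _

/-- inhomogeneous model: for `X` of rank `ρ` with SVD `X = U Σ Vᵀ`,
`π_i = λ_i(Σ²)/‖X‖_F²`, leverage-score probabilities `ξˡ` and row-norm probabilities
`ξʳ`: `‖ξʳ − ξˡ‖₂ ≤ sqrt(Σ_i π_i² − 1/ρ)` and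
`‖ξʳ − ξˡ‖_∞ ≤ max( max_i π_i − 1/ρ , 1/ρ − min_i π_i )`. -/
theorem stmt18 {m ρ : ℕ} [NeZero ρ] (hρm : ρ ≤ m)
    (X : Matrix (Fin m) (Fin ρ) ℝ)
    (U : Matrix (Fin m) (Fin ρ) ℝ) (hU : Uᵀ * U = 1)
    (V : Matrix (Fin ρ) (Fin ρ) ℝ) (hV : Vᵀ * V = 1)
    (s : Fin ρ → ℝ) (hs : ∀ i, 0 < s i)
    (hX : X = U * Matrix.diagonal s * Vᵀ)
    (π : Fin ρ → ℝ) (hπ : ∀ i, π i = s i ^ 2 / (∑ ℓ, ∑ j, X ℓ j ^ 2))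
    (ξl ξr : Fin m → ℝ)
    (hξl : ∀ ℓ, ξl ℓ = (∑ j, U ℓ j ^ 2) / ρ)
    (hξr : ∀ ℓ, ξr ℓ = (∑ j, X ℓ j ^ 2) / (∑ ℓ', ∑ j, X ℓ' j ^ 2)) :
    Real.sqrt (∑ ℓ, (ξr ℓ - ξl ℓ) ^ 2) ≤ Real.sqrt ((∑ i, π i ^ 2) - 1 / ρ) ∧
    ∀ ℓ, |ξr ℓ - ξl ℓ| ≤
      max (Finset.univ.sup' Finset.univ_nonempty π - 1 / ρ)
          (1 / ρ - Finset.univ.inf' Finset.univ_nonempty π) :=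
  stmt18_general X U hU V hV s hs hX π hπ ξl ξr hξl hξr
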